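/- Let S be a commutative semiring with 0 and 1, n ≥ 1, Σ an alphabet, u, v ∈ Σ*, π a path in Γ_{n,Σ}, and m a formal monomial in S[X_{n,Σ}]. Then there is a bijection between: (a) the set of occurrences of π in the concatenation uv whose monomial equals m, and (b) the set of quadruples (α, β, p, q) where π = αβ is a factorization of π into a path α followed by a path β, p is an occurrence of α in u, q is an occurrence of β in v, and the product of the monomials of p and q equals m as a formal monomial. -/

import Mathlib

attribute [local instance] Classical.propDecidable

open scoped BigOperators

/-- The submonoid of upper triangular `n × n` matrices over `S`. -/
def UT (n : ℕ) (S : Type*) [CommSemiring S] : Submonoid (Matrix (Fin n) (Fin n) S) where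
  carrier := {A | ∀ i j : Fin n, j < i → A i j = 0}
  one_mem' := fun i j hij => Matrix.one_apply_ne (ne_of_gt hij)
  mul_mem' := by
    intro a b ha hb i j hij
    rw [Matrix.mul_apply]
    apply Finset.sum_eq_zero
    intro k _
    rcases lt_or_ge k i with h | h
    · rw [ha i k h, zero_mul]
    · rw [hb k j (lt_of_lt_of_le hij h), mul_zero]

/-- A path in the loop-free quiver `Γ_{n,Σ}`: a start vertex together with a list of
labelled edges, the visited vertices being strictly increasing. -/
structure QPath (n : ℕ) (A : Type*) where
  start : Fin n
  steps : List (A × Fin n)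
  chain : List.Chain' (· < ·) (start :: steps.map Prod.snd)

namespace QPath

variable {n : ℕ} {A : Type*}

/-- The `j`-th vertex visited by the path. -/
def vtx (π : QPath n A) (j : ℕ) : Fin n :=
  (π.start :: π.steps.map Prod.snd).getD j π.start

/-- The label of a path. -/
def label (π : QPath n A) : List A := π.steps.map Prod.fst

/-- The final vertex of a path. -/
def last (π : QPath n A) : Fin n := π.vtx π.steps.length

end QPath

/-- `p` is an occurrence of the path `π` in the word `w`. -/
def IsOcc {n : ℕ} {A : Type*} (π : QPath n A) (w : List A)
    (p : Fin π.steps.length → Fin w.length) : Prop :=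
  (∀ j k, j < k → p j < p k) ∧ ∀ j, w.get (p j) = (π.steps.get j).1

/-- The monomial corresponding to an occurrence. -/
noncomputable def occMonomial (S : Type*) [CommSemiring S] {n : ℕ} {A : Type*}
    (π : QPath n A) (w : List A) (p : Fin π.steps.length → Fin w.length) :
    MvPolynomial (A × Fin n) S :=
  ∏ i : Fin w.length,
    if ∃ j, p j = i then 1
    else MvPolynomial.X (w.get i, π.vtx (Finset.univ.filter (fun j => p j < i)).card)

/-- The formal polynomial `f_π^w`. -/
noncomputable def fPoly (S : Type*) [CommSemiring S] {n : ℕ} {A : Type*}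
    (π : QPath n A) (w : List A) : MvPolynomial (A × Fin n) S :=
  ∑ p ∈ Finset.univ.filter (IsOcc π w), occMonomial S π w p

namespace QPath
variable {n : ℕ} {A : Type*}

/-- The initial segment of a path consisting of its first `j` edges. -/
def take (π : QPath n A) (j : ℕ) : QPath n A :=
  ⟨π.start, π.steps.take j, by
    have h : (π.start :: (π.steps.take j).map Prod.snd) =
        (π.start :: π.steps.map Prod.snd).take (j + 1) := by
      simp [List.map_take]
    rw [h]
    exact π.chain.take _⟩

/-- The final segment of a path obtained by removing its first `j` edges. -/
def drop (π : QPath n A) (j : ℕ) : QPath n A :=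
  ⟨π.vtx j, π.steps.drop j, by
    rcases le_or_gt j π.steps.length with hj | hj
    · have hlen : j < (π.start :: π.steps.map Prod.snd).length := by
        simp; omega
      have h : π.vtx j :: (π.steps.drop j).map Prod.snd =
          (π.start :: π.steps.map Prod.snd).drop j := by
        rw [List.map_drop, List.drop_eq_getElem_cons hlen, List.drop_succ_cons]
        congr 1
        exact List.getD_eq_getElem _ _ hlen
      rw [h]
      exact π.chain.drop _
    · have h : π.steps.drop j = [] := List.drop_eq_nil_of_le (by omega)
      rw [h]
      exact List.isChain_singleton _⟩

end QPath

/-- `π = αβ`: the pair `(α, β)` is a factorisation of the path `π`. -/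
def IsFactorization {n : ℕ} {A : Type*} (π α β : QPath n A) : Prop :=
  α.start = π.start ∧ β.start = α.last ∧ α.steps ++ β.steps = π.steps

/-!
Index the positions of `u ++ v` by `Fin |u| ⊕ Fin |v|`. An occurrence `P` of `π` in `u ++ v` is
strictly increasing, so the edges it sends into `u` are the first `k = #{j | P j < |u|}` ones;
cutting `π` after `k` edges splits `P` into an occurrence in `u` of the first part and one in `v`
of the second. Conversely two such occurrences glue to an occurrence of `π`, from which the cut is
recovered as the same count, so gluing is a bijection. A letter of `v` preceded by `k + r` matched
letters gets vertex `k + r` of `π`, which is vertex `r` of the second part; hence the monomial of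
the glued occurrence is the product of the two monomials.
-/

open Finset

section FinAppend

variable {a b c d N M : ℕ}

def finSplitEquiv (h : a + b = N) : Fin N ≃ Fin a ⊕ Fin b :=
  (finCongr h.symm).trans finSumFinEquiv.symm

@[simp]
theorem val_finSplitEquiv_symm_inl (h : a + b = N) (i : Fin a) :
    ((finSplitEquiv h).symm (.inl i) : ℕ) = i := by
  simp [finSplitEquiv]

@[simp]
theorem val_finSplitEquiv_symm_inr (h : a + b = N) (i : Fin b) :
    ((finSplitEquiv h).symm (.inr i) : ℕ) = a + i := by
  simp [finSplitEquiv]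

theorem List.get_finSplitEquiv_symm_inl {X : Type*} {l₁ l₂ l : List X} (h : l₁ ++ l₂ = l)
    (hl : l₁.length + l₂.length = l.length) (i : Fin l₁.length) :
    l.get ((finSplitEquiv hl).symm (.inl i)) = l₁.get i := by
  subst h
  simp [List.getElem_append_left]

theorem List.get_finSplitEquiv_symm_inr {X : Type*} {l₁ l₂ l : List X} (h : l₁ ++ l₂ = l)
    (hl : l₁.length + l₂.length = l.length) (i : Fin l₂.length) :
    l.get ((finSplitEquiv hl).symm (.inr i)) = l₂.get i := by
  subst h
  simp [List.getElem_append_right]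

def finAppendMap (hab : a + b = N) (hcd : c + d = M) (p : Fin a → Fin c) (q : Fin b → Fin d) :
    Fin N → Fin M :=
  (finSplitEquiv hcd).symm ∘ Sum.map p q ∘ finSplitEquiv hab

variable (hab : a + b = N) (hcd : c + d = M) (p : Fin a → Fin c) (q : Fin b → Fin d)

@[simp]
theorem finAppendMap_inl (i : Fin a) :
    finAppendMap hab hcd p q ((finSplitEquiv hab).symm (.inl i)) =
      (finSplitEquiv hcd).symm (.inl (p i)) := by
  simp [finAppendMap]

@[simp]
theorem finAppendMap_inr (i : Fin b) :
    finAppendMap hab hcd p q ((finSplitEquiv hab).symm (.inr i)) =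
      (finSplitEquiv hcd).symm (.inr (q i)) := by
  simp [finAppendMap]

theorem finAppendMap_inj {p' : Fin a → Fin c} {q' : Fin b → Fin d} :
    finAppendMap hab hcd p q = finAppendMap hab hcd p' q' ↔ p = p' ∧ q = q' := by
  refine ⟨fun h => ⟨funext fun i => ?_, funext fun i => ?_⟩, ?_⟩
  · simpa using congrFun h ((finSplitEquiv hab).symm (.inl i))
  · simpa using congrFun h ((finSplitEquiv hab).symm (.inr i))
  · rintro ⟨rfl, rfl⟩
    rfl

theorem strictMono_finAppendMap_iff :
    StrictMono (finAppendMap hab hcd p q) ↔ StrictMono p ∧ StrictMono q := by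
  constructor
  · intro h
    refine ⟨fun i j hij => ?_, fun i j hij => ?_⟩
    · have := @h ((finSplitEquiv hab).symm (.inl i)) ((finSplitEquiv hab).symm (.inl j))
        (by simpa [← Fin.val_fin_lt] using hij)
      simpa [← Fin.val_fin_lt] using this
    · have := @h ((finSplitEquiv hab).symm (.inr i)) ((finSplitEquiv hab).symm (.inr j))
        (by simpa [← Fin.val_fin_lt] using hij)
      simpa [← Fin.val_fin_lt] using this
  · rintro ⟨hp, hq⟩ x y hxy
    obtain ⟨s, rfl⟩ := (finSplitEquiv hab).symm.surjective x
    obtain ⟨t, rfl⟩ := (finSplitEquiv hab).symm.surjective y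
    rw [← Fin.val_fin_lt] at hxy ⊢
    rcases s with i | i <;> rcases t with j | j <;>
      simp only [finAppendMap_inl, finAppendMap_inr, val_finSplitEquiv_symm_inl,
        val_finSplitEquiv_symm_inr] at hxy ⊢
    · exact hp hxy
    · have := (p i).isLt; omega
    · have := j.isLt; omega
    · exact Nat.add_lt_add_left (hq (Fin.lt_def.2 (by omega))) c

theorem exists_finAppendMap_eq_inl_iff (i : Fin c) :
    (∃ j, finAppendMap hab hcd p q j = (finSplitEquiv hcd).symm (.inl i)) ↔ ∃ j, p j = i := by
  rw [(finSplitEquiv hab).exists_congr_left, Sum.exists]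
  simp

theorem exists_finAppendMap_eq_inr_iff (i : Fin d) :
    (∃ j, finAppendMap hab hcd p q j = (finSplitEquiv hcd).symm (.inr i)) ↔ ∃ j, q j = i := by
  rw [(finSplitEquiv hab).exists_congr_left, Sum.exists]
  simp

theorem card_filter_finAppendMap_lt_inl (i : Fin c) :
    #{j | finAppendMap hab hcd p q j < (finSplitEquiv hcd).symm (.inl i)} = #{j | p j < i} := by
  have hq (j : Fin b) : ¬ c + (q j : ℕ) < i := by have := i.isLt; omega
  rw [card_filter, ← (finSplitEquiv hab).symm.sum_comp, Fintype.sum_sum_type]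
  simp [← Fin.val_fin_lt, hq]

theorem card_filter_finAppendMap_lt_inr (i : Fin d) :
    #{j | finAppendMap hab hcd p q j < (finSplitEquiv hcd).symm (.inr i)} =
      a + #{j | q j < i} := by
  have hp (j : Fin a) : (p j : ℕ) < c + i := by have := (p j).isLt; omega
  rw [card_filter, ← (finSplitEquiv hab).symm.sum_comp, Fintype.sum_sum_type]
  simp [← Fin.val_fin_lt, hp]

theorem card_filter_finAppendMap_val_lt : #{j | (finAppendMap hab hcd p q j : ℕ) < c} = a := by
  rw [card_filter, ← (finSplitEquiv hab).symm.sum_comp, Fintype.sum_sum_type]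
  simp

theorem exists_finAppendMap_eq {P : Fin N → Fin M} (hP : Monotone P)
    (ha : #{j | (P j : ℕ) < c} = a) : ∃ p q, finAppendMap hab hcd p q = P := by
  have key (j : Fin N) : (j : ℕ) < a ↔ (P j : ℕ) < c := ha ▸
    Fin.lt_card_filter_univ_iff_apply_of_imp _ fun _ _ hji h => Nat.lt_of_le_of_lt (hP hji) h
  have hleft (i : Fin a) : (P ((finSplitEquiv hab).symm (.inl i)) : ℕ) < c :=
    (key _).1 (by simp)
  have hright (i : Fin b) : c ≤ P ((finSplitEquiv hab).symm (.inr i)) :=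
    not_lt.1 ((key _).not.1 (by simp))
  have hM (j : Fin N) : (P j : ℕ) < c + d := hcd ▸ (P j).isLt
  refine ⟨fun i => ⟨_, hleft i⟩, fun i => ⟨P ((finSplitEquiv hab).symm (.inr i)) - c, ?_⟩,
    funext fun x => ?_⟩
  · have := hM ((finSplitEquiv hab).symm (.inr i))
    have := hright i
    omega
  · obtain ⟨s | i, rfl⟩ := (finSplitEquiv hab).symm.surjective x
    · ext; simp
    · have := hright i
      ext; simp; omega

end FinAppend

namespace QPath

variable {n : ℕ} {A : Type*}

theorem ext {π π' : QPath n A} (h₁ : π.start = π'.start) (h₂ : π.steps = π'.steps) :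
    π = π' := by
  cases π; cases π'; simp_all

@[simp]
theorem length_steps_take (π : QPath n A) (k : ℕ) :
    (π.take k).steps.length = min k π.steps.length := by
  simp [QPath.take]

theorem vtx_take (π : QPath n A) {j k : ℕ} (hk : k ≤ j) (hj : k ≤ π.steps.length) :
    (π.take j).vtx k = π.vtx k := by
  unfold QPath.vtx QPath.take
  cases k with
  | zero => rfl
  | succ k =>
    simp only [List.map_take, List.getD_eq_getElem?_getD, List.getElem?_cons_succ,
      List.getElem?_take]
    rw [if_pos (by omega)]

theorem vtx_drop (π : QPath n A) {j k : ℕ} (hj : j ≤ π.steps.length)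
    (hk : k ≤ π.steps.length - j) : (π.drop j).vtx k = π.vtx (j + k) := by
  unfold QPath.vtx QPath.drop
  cases k with
  | zero => rfl
  | succ k =>
    rw [show j + (k + 1) = (j + k) + 1 by omega]
    simp only [List.getD_eq_getElem?_getD, List.getElem?_cons_succ, List.map_drop,
      List.getElem?_drop]
    rw [List.getElem?_eq_getElem (by simp at hj hk ⊢; omega)]
    simp

theorem isFactorization_take_drop (π : QPath n A) {k : ℕ} (hk : k ≤ π.steps.length) :
    IsFactorization π (π.take k) (π.drop k) := by
  refine ⟨rfl, ?_, List.take_append_drop k π.steps⟩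
  rw [QPath.last, length_steps_take, min_eq_left hk, vtx_take π le_rfl hk]
  rfl

end QPath

namespace IsFactorization

variable {n : ℕ} {A : Type*} {π α β : QPath n A}

theorem length_add (h : IsFactorization π α β) :
    α.steps.length + β.steps.length = π.steps.length := by
  rw [← h.2.2, List.length_append]

theorem eq_take (h : IsFactorization π α β) : α = π.take α.steps.length :=
  QPath.ext h.1 (by simp [QPath.take, ← h.2.2])

theorem vtx_left (h : IsFactorization π α β) {k : ℕ} (hk : k ≤ α.steps.length) :
    α.vtx k = π.vtx k := by
  rw [h.eq_take]
  exact QPath.vtx_take π hk (hk.trans (h.length_add ▸ Nat.le_add_right _ _))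

theorem eq_drop (h : IsFactorization π α β) : β = π.drop α.steps.length := by
  refine QPath.ext ?_ (by simp [QPath.drop, ← h.2.2])
  rw [h.2.1, QPath.last, h.vtx_left le_rfl]
  rfl

theorem vtx_right (h : IsFactorization π α β) {k : ℕ} (hk : k ≤ β.steps.length) :
    β.vtx k = π.vtx (α.steps.length + k) := by
  rw [h.eq_drop]
  exact QPath.vtx_drop π (h.length_add ▸ Nat.le_add_right _ _) (by have := h.length_add; omega)

end IsFactorization

section Occurrence

variable {n : ℕ} {A : Type*} {u v : List A} {π α β : QPath n A}

def occAppend (hfac : IsFactorization π α β) (p : Fin α.steps.length → Fin u.length)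
    (q : Fin β.steps.length → Fin v.length) : Fin π.steps.length → Fin (u ++ v).length :=
  finAppendMap hfac.length_add List.length_append.symm p q

theorem isOcc_iff {w : List A} {p : Fin π.steps.length → Fin w.length} :
    IsOcc π w p ↔ StrictMono p ∧ ∀ j, w.get (p j) = (π.steps.get j).1 := Iff.rfl

theorem isOcc_occAppend_iff (hfac : IsFactorization π α β)
    (p : Fin α.steps.length → Fin u.length) (q : Fin β.steps.length → Fin v.length) :
    IsOcc π (u ++ v) (occAppend hfac p q) ↔ IsOcc α u p ∧ IsOcc β v q := by
  simp only [isOcc_iff, occAppend, strictMono_finAppendMap_iff]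
  rw [(finSplitEquiv hfac.length_add).forall_congr_left, Sum.forall]
  simp only [finAppendMap_inl, finAppendMap_inr, List.get_finSplitEquiv_symm_inl rfl,
    List.get_finSplitEquiv_symm_inr rfl, List.get_finSplitEquiv_symm_inl hfac.2.2,
    List.get_finSplitEquiv_symm_inr hfac.2.2]
  tauto

theorem occMonomial_occAppend (S : Type*) [CommSemiring S] (hfac : IsFactorization π α β)
    (p : Fin α.steps.length → Fin u.length) (q : Fin β.steps.length → Fin v.length) :
    occMonomial S π (u ++ v) (occAppend hfac p q) =
      occMonomial S α u p * occMonomial S β v q := by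
  rw [occAppend, occMonomial, ← (finSplitEquiv List.length_append.symm).symm.prod_comp,
    Fintype.prod_sum_type]
  congr 1 <;> refine prod_congr rfl fun i _ => ?_
  · simp only [exists_finAppendMap_eq_inl_iff, List.get_finSplitEquiv_symm_inl rfl]
    rw [card_filter_finAppendMap_lt_inl, hfac.vtx_left ((card_filter_le _ _).trans (by simp))]
  · simp only [exists_finAppendMap_eq_inr_iff, List.get_finSplitEquiv_symm_inr rfl]
    rw [card_filter_finAppendMap_lt_inr, hfac.vtx_right ((card_filter_le _ _).trans (by simp))]

end Occurrence

section Splitting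

variable {n : ℕ} {A : Type*} {u v : List A} {π : QPath n A}

theorem eq_of_occAppend_eq {α β α' β' : QPath n A} {p : Fin α.steps.length → Fin u.length}
    {q : Fin β.steps.length → Fin v.length} {p' : Fin α'.steps.length → Fin u.length}
    {q' : Fin β'.steps.length → Fin v.length} (hfac : IsFactorization π α β)
    (hfac' : IsFactorization π α' β') (h : occAppend hfac p q = occAppend hfac' p' q') :
    (⟨α, β, p, q⟩ : Σ (α β : QPath n A),
      (Fin α.steps.length → Fin u.length) × (Fin β.steps.length → Fin v.length)) =
      ⟨α', β', p', q'⟩ := by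
  have hlen : α.steps.length = α'.steps.length := by
    rw [← card_filter_finAppendMap_val_lt hfac.length_add List.length_append.symm p q,
      ← card_filter_finAppendMap_val_lt hfac'.length_add List.length_append.symm p' q']
    exact congrArg (fun P => #{j | ((P j : Fin (u ++ v).length) : ℕ) < u.length}) h
  have hα : α = α' := by rw [hfac.eq_take, hfac'.eq_take, hlen]
  have hβ : β = β' := by rw [hfac.eq_drop, hfac'.eq_drop, hlen]
  subst hα hβ
  obtain ⟨rfl, rfl⟩ := (finAppendMap_inj _ _ _ _).1 h
  rfl

theorem exists_occAppend_eq {P : Fin π.steps.length → Fin (u ++ v).length} (hP : Monotone P) :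
    ∃ (α β : QPath n A) (hfac : IsFactorization π α β)
      (p : Fin α.steps.length → Fin u.length) (q : Fin β.steps.length → Fin v.length),
      occAppend hfac p q = P := by
  set k := #{j | (P j : ℕ) < u.length}
  have hk : k ≤ π.steps.length := (card_filter_le _ _).trans (by simp)
  exact ⟨π.take k, π.drop k, π.isFactorization_take_drop hk,
    exists_finAppendMap_eq _ _ hP (by rw [QPath.length_steps_take, min_eq_left hk])⟩

end Splitting

theorem occurrence_splitting_bijection_general {S : Type*} [CommSemiring S]
    {n : ℕ} {A : Type*} (u v : List A) (π : QPath n A)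
    (m : MvPolynomial (A × Fin n) S) :
    Nonempty (
      {p : Fin π.steps.length → Fin (u ++ v).length //
          IsOcc π (u ++ v) p ∧ occMonomial S π (u ++ v) p = m} ≃
      {x : Σ (α : QPath n A) (β : QPath n A),
            (Fin α.steps.length → Fin u.length) × (Fin β.steps.length → Fin v.length) //
          IsFactorization π x.1 x.2.1 ∧ IsOcc x.1 u x.2.2.1 ∧ IsOcc x.2.1 v x.2.2.2 ∧
            occMonomial S x.1 u x.2.2.1 * occMonomial S x.2.1 v x.2.2.2 = m}) := by
  refine ⟨(Equiv.ofBijective (fun x => ⟨occAppend x.2.1 x.1.2.2.1 x.1.2.2.2,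
    (isOcc_occAppend_iff _ _ _).2 ⟨x.2.2.1, x.2.2.2.1⟩,
    (occMonomial_occAppend S _ _ _).trans x.2.2.2.2⟩) ⟨?_, ?_⟩).symm⟩
  · rintro ⟨⟨α, β, p, q⟩, hfac, _⟩ ⟨⟨α', β', p', q'⟩, hfac', _⟩ h
    exact Subtype.ext (eq_of_occAppend_eq hfac hfac' (congrArg Subtype.val h))
  · rintro ⟨P, hP, hPm⟩
    obtain ⟨α, β, hfac, p, q, rfl⟩ := exists_occAppend_eq (isOcc_iff.1 hP).1.monotone
    obtain ⟨hp, hq⟩ := (isOcc_occAppend_iff hfac p q).1 hP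
    rw [occMonomial_occAppend] at hPm
    exact ⟨⟨⟨α, β, p, q⟩, hfac, hp, hq, hPm⟩, rfl⟩

theorem occurrence_splitting_bijection {S : Type*} [CommSemiring S] [Nontrivial S]
    {n : ℕ} (hn : 1 ≤ n) {A : Type*} (u v : List A) (π : QPath n A)
    (m : MvPolynomial (A × Fin n) S)
    (hm : ∃ (d : (A × Fin n) →₀ ℕ) (c : S), m = MvPolynomial.monomial d c) :
    Nonempty (
      {p : Fin π.steps.length → Fin (u ++ v).length //
          IsOcc π (u ++ v) p ∧ occMonomial S π (u ++ v) p = m} ≃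
      {x : Σ (α : QPath n A) (β : QPath n A),
            (Fin α.steps.length → Fin u.length) × (Fin β.steps.length → Fin v.length) //
          IsFactorization π x.1 x.2.1 ∧ IsOcc x.1 u x.2.2.1 ∧ IsOcc x.2.1 v x.2.2.2 ∧
            occMonomial S x.1 u x.2.2.1 * occMonomial S x.2.1 v x.2.2.2 = m}) :=
  occurrence_splitting_bijection_general u v π m
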